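/- arXiv:0802.3284 — 5 statements merged into one kernel-verified Lean document; each statement's English description precedes it below -/
import Mathlib

section
/- For every connected finite simple graph G on n vertices, F(G) ≤ 2^{n−1} + 1, with equality if and only if G is the star S_n. -/
/-!
If some vertex `r` is adjacent to all others, an independent set is either `{r}` or a subset of
`V ∖ {r}`; this gives `F(G) ≤ 2^(n-1) + 1`, with equality exactly when no edge avoids `r`, i.e.
when `G` is the star centred at `r`.

Otherwise connectivity yields a vertex `r` of degree at least two and an edge `ab` avoiding `r`.
An independent set through `r` is `r` together with a set of non-neighbours of `r`, so there are
at most `2^(n-1-deg r) ≤ 2^(n-3)` of them, while the independent sets avoiding `r` are subsets of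
`V ∖ {r}` missing all `2^(n-3)` sets that contain both `a` and `b`. Hence `F(G) ≤ 2^(n-1)`.
-/

open Finset
open scoped Classical

/-- The Fibonacci index: the number of independent (stable) sets of `G`,
including the empty set. -/
noncomputable def fibIndex {V : Type*} [Fintype V] (G : SimpleGraph V) : ℕ :=
  (Finset.univ.filter fun s : Finset V => ∀ a ∈ s, ∀ b ∈ s, ¬ G.Adj a b).card

/-- The independence (stability) number of `G`. -/
noncomputable def indepNum {V : Type*} [Fintype V] (G : SimpleGraph V) : ℕ :=
  (Finset.univ.filter fun s : Finset V => ∀ a ∈ s, ∀ b ∈ s, ¬ G.Adj a b).sup Finset.card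

namespace SimpleGraph

variable {V : Type*} [Fintype V]

noncomputable def indepFinsets (G : SimpleGraph V) : Finset (Finset V) :=
  univ.filter fun s : Finset V => ∀ a ∈ s, ∀ b ∈ s, ¬ G.Adj a b

variable {G : SimpleGraph V}

theorem fibIndex_eq_card_indepFinsets : fibIndex G = #G.indepFinsets := rfl

@[simp]
theorem mem_indepFinsets {s : Finset V} :
    s ∈ G.indepFinsets ↔ ∀ a ∈ s, ∀ b ∈ s, ¬ G.Adj a b := by
  simp [indepFinsets]

theorem card_insert_singleton_powerset_erase (r : V) :
    #(insert {r} (univ.erase r).powerset) = 2 ^ (Fintype.card V - 1) + 1 := by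
  rw [card_insert_of_notMem (by simp [subset_iff]), card_powerset, card_erase_of_mem (mem_univ r),
    card_univ]

theorem indepFinsets_subset_of_dominating {r : V} (hr : ∀ x, x ≠ r → G.Adj r x) :
    G.indepFinsets ⊆ insert {r} (univ.erase r).powerset := by
  intro s hs
  rw [mem_indepFinsets] at hs
  rw [mem_insert, mem_powerset]
  by_cases hrs : r ∈ s
  · left
    exact eq_singleton_iff_unique_mem.2
      ⟨hrs, fun x hx => by_contra fun hxr => hs r hrs x hx (hr x hxr)⟩
  · right
    exact fun x hx => mem_erase.2 ⟨by rintro rfl; exact hrs hx, mem_univ x⟩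

theorem powerset_erase_subset_indepFinsets_iff (r : V) :
    (univ.erase r).powerset ⊆ G.indepFinsets ↔ ∀ a b, G.Adj a b → a = r ∨ b = r := by
  constructor
  · intro h a b hab
    by_contra! hne
    have hmem : {a, b} ∈ G.indepFinsets :=
      h (mem_powerset.2 (by simp [insert_subset_iff, hne.1, hne.2]))
    exact mem_indepFinsets.1 hmem a (by simp) b (by simp) hab
  · intro h s hs
    rw [mem_powerset] at hs
    rw [mem_indepFinsets]
    intro a ha b hb hab
    rcases h a b hab with rfl | rfl
    · exact notMem_erase a univ (hs ha)
    · exact notMem_erase b univ (hs hb)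

theorem fibIndex_le_of_dominating {r : V} (hr : ∀ x, x ≠ r → G.Adj r x) :
    fibIndex G ≤ 2 ^ (Fintype.card V - 1) + 1 :=
  card_insert_singleton_powerset_erase r ▸ card_le_card (indepFinsets_subset_of_dominating hr)

theorem fibIndex_eq_iff_of_dominating {r : V} (hr : ∀ x, x ≠ r → G.Adj r x) :
    fibIndex G = 2 ^ (Fintype.card V - 1) + 1 ↔
      ∀ a b, G.Adj a b ↔ a ≠ b ∧ (a = r ∨ b = r) := by
  have hsub := indepFinsets_subset_of_dominating hr
  have hcard : fibIndex G = 2 ^ (Fintype.card V - 1) + 1 ↔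
      (univ.erase r).powerset ⊆ G.indepFinsets := by
    rw [fibIndex_eq_card_indepFinsets, ← card_insert_singleton_powerset_erase r]
    refine ⟨fun h => (eq_of_subset_of_card_le hsub h.ge) ▸ subset_insert _ _, fun h => ?_⟩
    exact congrArg card (hsub.antisymm (insert_subset (by simp) h))
  rw [hcard, powerset_erase_subset_indepFinsets_iff]
  refine ⟨fun h a b => ⟨fun hab => ⟨hab.ne, h a b hab⟩, ?_⟩,
    fun h a b hab => ((h a b).1 hab).2⟩
  rintro ⟨hne, rfl | rfl⟩
  · exact hr b hne.symm
  · exact (hr a hne).symm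

theorem card_indepFinsets_filter_mem_le (r : V) :
    #{s ∈ G.indepFinsets | r ∈ s} ≤ 2 ^ (Fintype.card V - 1 - G.degree r) := by
  calc #{s ∈ G.indepFinsets | r ∈ s} ≤ #(insert r (G.neighborFinset r))ᶜ.powerset := by
        refine card_le_card_of_injOn (·.erase r) ?_ ((erase_injOn' r).mono fun s hs => ?_)
        · intro s hs
          obtain ⟨hind, hrs⟩ := mem_filter.1 (mem_coe.1 hs)
          refine mem_coe.2 (mem_powerset.2 fun x hx => ?_)
          rw [mem_compl, mem_insert, mem_neighborFinset, not_or]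
          exact ⟨ne_of_mem_erase hx, mem_indepFinsets.1 hind r hrs x (mem_of_mem_erase hx)⟩
        · exact (mem_filter.1 hs).2
    _ = 2 ^ (Fintype.card V - 1 - G.degree r) := by
        rw [card_powerset, card_compl, card_insert_of_notMem (by simp),
          card_neighborFinset_eq_degree, Nat.sub_sub, add_comm]

theorem card_indepFinsets_filter_notMem_add_le {r a b : V} (hab : G.Adj a b) (ha : a ≠ r)
    (hb : b ≠ r) :
    #{s ∈ G.indepFinsets | r ∉ s} + 2 ^ (Fintype.card V - 3) ≤ 2 ^ (Fintype.card V - 1) := by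
  have hpair : {a, b} ⊆ univ.erase r := by simp [insert_subset_iff, ha, hb]
  have hdisj : Disjoint {s ∈ G.indepFinsets | r ∉ s} (Icc {a, b} (univ.erase r)) := by
    refine Finset.disjoint_left.2 fun s hs hs' => ?_
    have hab_s : {a, b} ⊆ s := (mem_Icc.1 hs').1
    exact mem_indepFinsets.1 (mem_filter.1 hs).1 a (hab_s (by simp)) b (hab_s (by simp)) hab
  have hunion : {s ∈ G.indepFinsets | r ∉ s} ∪ Icc {a, b} (univ.erase r) ⊆
      (univ.erase r).powerset := by
    refine union_subset (fun s hs => mem_powerset.2 fun x hx => ?_) fun s hs => ?_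
    · exact mem_erase.2 ⟨by rintro rfl; exact (mem_filter.1 hs).2 hx, mem_univ x⟩
    · exact mem_powerset.2 (mem_Icc.1 hs).2
  calc #{s ∈ G.indepFinsets | r ∉ s} + 2 ^ (Fintype.card V - 3)
      = #({s ∈ G.indepFinsets | r ∉ s} ∪ Icc {a, b} (univ.erase r)) := by
        rw [card_union_of_disjoint hdisj, card_Icc_finset hpair, card_erase_of_mem (mem_univ r),
          card_univ, card_pair hab.ne, Nat.sub_sub]
    _ ≤ #(univ.erase r).powerset := card_le_card hunion
    _ = 2 ^ (Fintype.card V - 1) := by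
        rw [card_powerset, card_erase_of_mem (mem_univ r), card_univ]

theorem fibIndex_le_of_two_le_degree {r a b : V} (hr : 2 ≤ G.degree r) (hab : G.Adj a b)
    (ha : a ≠ r) (hb : b ≠ r) : fibIndex G ≤ 2 ^ (Fintype.card V - 1) := by
  have hmem := card_indepFinsets_filter_mem_le (G := G) r
  have hnot := card_indepFinsets_filter_notMem_add_le hab ha hb
  have hpow : 2 ^ (Fintype.card V - 1 - G.degree r) ≤ 2 ^ (Fintype.card V - 3) :=
    Nat.pow_le_pow_right two_pos (by omega)
  rw [fibIndex_eq_card_indepFinsets,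
    ← card_filter_add_card_filter_not (s := G.indepFinsets) (r ∈ ·)]
  omega

theorem Connected.exists_two_le_degree_of_forall_exists_not_adj (hG : G.Connected)
    (h : ∀ r, ∃ x, x ≠ r ∧ ¬ G.Adj r x) :
    ∃ r, 2 ≤ G.degree r ∧ ∃ a b, a ≠ r ∧ b ≠ r ∧ G.Adj a b := by
  obtain ⟨v⟩ := hG.nonempty
  obtain ⟨w, hwv, hvw⟩ := h v
  obtain ⟨p, hp⟩ := hG.exists_walk_length_eq_dist v w
  obtain ⟨x, r, y, hxr, hry, -, hxy⟩ :=
    p.exists_adj_adj_not_adj_ne hp (hG.one_lt_dist_of_ne_of_not_adj hwv.symm hvw)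
  have hdeg : 2 ≤ G.degree r := by
    rw [← card_neighborFinset_eq_degree, ← card_pair hxy]
    exact card_le_card (by simp [insert_subset_iff, hxr.symm, hry])
  obtain ⟨a, har, hra⟩ := h r
  have : Nontrivial V := ⟨⟨x, y, hxy⟩⟩
  obtain ⟨b, hab⟩ := hG.preconnected.exists_adj_of_nontrivial a
  exact ⟨r, hdeg, a, b, har, by rintro rfl; exact hra hab.symm, hab⟩

end SimpleGraph

theorem stmt_7 {V : Type*} [Fintype V] (G : SimpleGraph V) (n : ℕ)
    (hn : n = Fintype.card V) (hG : G.Connected) :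
    fibIndex G ≤ 2 ^ (n - 1) + 1 ∧
      (fibIndex G = 2 ^ (n - 1) + 1 ↔
        ∃ c : V, ∀ a b, G.Adj a b ↔ a ≠ b ∧ (a = c ∨ b = c)) := by
  subst hn
  have hstar : (∃ c : V, ∀ a b, G.Adj a b ↔ a ≠ b ∧ (a = c ∨ b = c)) →
      fibIndex G = 2 ^ (Fintype.card V - 1) + 1 := by
    rintro ⟨c, hc⟩
    have hdom : ∀ x, x ≠ c → G.Adj c x := fun x hx => (hc c x).2 ⟨hx.symm, .inl rfl⟩
    exact (SimpleGraph.fibIndex_eq_iff_of_dominating hdom).2 hc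
  by_cases hdom : ∃ r : V, ∀ x, x ≠ r → G.Adj r x
  · obtain ⟨r, hr⟩ := hdom
    exact ⟨SimpleGraph.fibIndex_le_of_dominating hr,
      fun h => ⟨r, (SimpleGraph.fibIndex_eq_iff_of_dominating hr).1 h⟩, hstar⟩
  · push Not at hdom
    obtain ⟨r, hr, a, b, ha, hb, hab⟩ :=
      hG.exists_two_le_degree_of_forall_exists_not_adj hdom
    have hle := SimpleGraph.fibIndex_le_of_two_le_degree hr hab ha hb
    exact ⟨by omega, fun h => by omega, hstar⟩
end

section
/- Let G be an α-critical graph and v a non-isolated vertex of G. Then α(G) = α(G − v) and α(G) = α(G − N[v]) + 1. -/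
/-!
Since the edge `vw` at `v` is `α`-critical, deleting it creates an independent set `T` larger than
`α(G)`; it must contain both `v` and `w`. Then `S = T \ {v, w}` has `|S| = α(G) - 1`, and both
`S ∪ {v}` and `S ∪ {w}` are independent in `G`. The set `S ∪ {w}` avoids `v`, so `α(G - v) = α(G)`,
and `S` avoids `N[v]`, so `α(G - N[v]) ≥ α(G) - 1`; conversely adding `v` to an independent set of
`G - N[v]` keeps it independent.
-/

open Finset
open scoped Classical

/-- A graph is `α`-critical if deleting any edge strictly increases the
independence number (a graph with no edges is `α`-critical by convention). -/
noncomputable def AlphaCritical {V : Type*} [Fintype V] (G : SimpleGraph V) : Prop :=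
  ∀ e ∈ G.edgeSet, indepNum G < indepNum (G.deleteEdges {e})

theorem SimpleGraph.IsIndepSet.diff_singleton_of_deleteEdges {V : Type*} {G : SimpleGraph V}
    {v w : V} {s : Set V} (hs : (G.deleteEdges {s(v, w)}).IsIndepSet s) :
    G.IsIndepSet (s \ {w}) := by
  intro a ha b hb hab hadj
  have hedge : s(a, b) = s(v, w) := by
    by_contra hne
    exact hs ha.1 hb.1 hab (SimpleGraph.deleteEdges_adj.mpr ⟨hadj, hne⟩)
  rcases Sym2.eq_iff.mp hedge with ⟨-, rfl⟩ | ⟨rfl, -⟩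
  · exact hb.2 rfl
  · exact ha.2 rfl

section IndepNum

variable {V : Type*} (G : SimpleGraph V)

lemma card_le_indepNum [Fintype V] {s : Finset V} (hs : G.IsIndepSet ↑s) : #s ≤ indepNum G :=
  le_sup (mem_filter.mpr ⟨mem_univ _, fun _ ha _ hb hab => hs ha hb (G.ne_of_adj hab) hab⟩)

lemma exists_isIndepSet_card_eq_indepNum [Fintype V] :
    ∃ s : Finset V, G.IsIndepSet ↑s ∧ #s = indepNum G := by
  obtain ⟨s, hs, hcard⟩ := exists_mem_eq_sup
    (univ.filter fun s : Finset V => ∀ a ∈ s, ∀ b ∈ s, ¬ G.Adj a b) ⟨∅, by simp⟩ card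
  exact ⟨s, fun a ha b hb _ => (mem_filter.mp hs).2 a ha b hb, hcard.symm⟩

lemma card_le_indepNum_induce (P : Set V) [Fintype P] {s : Finset V} (hs : G.IsIndepSet ↑s)
    (hsP : ↑s ⊆ P) : #s ≤ indepNum (G.induce P) := by
  have hcard : #(s.subtype (· ∈ P)) = #s := by
    rw [card_subtype, filter_true_of_mem fun x hx => hsP hx]
  rw [← hcard]
  refine card_le_indepNum _ fun x hx y hy hxy => ?_
  rw [mem_coe, mem_subtype] at hx hy
  exact hs hx hy (Subtype.val_injective.ne hxy)

lemma exists_isIndepSet_subset_card_eq_indepNum_induce (P : Set V) [Fintype P] :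
    ∃ s : Finset V, ↑s ⊆ P ∧ G.IsIndepSet ↑s ∧ #s = indepNum (G.induce P) := by
  obtain ⟨t, ht, hcard⟩ := exists_isIndepSet_card_eq_indepNum (G.induce P)
  refine ⟨t.map (Function.Embedding.subtype _), ?_, ?_, by rw [card_map, hcard]⟩
  · rw [coe_map]
    rintro _ ⟨x, -, rfl⟩
    exact x.2
  · rw [coe_map]
    exact ht.image

variable [Fintype V]

lemma indepNum_induce_le (P : Set V) [Fintype P] : indepNum (G.induce P) ≤ indepNum G := by
  obtain ⟨s, -, hs, hcard⟩ := exists_isIndepSet_subset_card_eq_indepNum_induce G P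
  exact hcard ▸ card_le_indepNum G hs

lemma indepNum_induce_compl_closedNbhd_add_one_le (v : V) :
    indepNum (G.induce (insert v (G.neighborSet v))ᶜ) + 1 ≤ indepNum G := by
  obtain ⟨s, hsP, hs, hcard⟩ :=
    exists_isIndepSet_subset_card_eq_indepNum_induce G (insert v (G.neighborSet v))ᶜ
  have hvs : v ∉ s := fun h => hsP h (Set.mem_insert v _)
  have hins : G.IsIndepSet ↑(insert v s) := by
    rw [coe_insert]
    refine Set.pairwise_insert.mpr ⟨hs, fun b hb _ => ⟨fun hvb => ?_, fun hbv => ?_⟩⟩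
    · exact hsP hb (Set.mem_insert_of_mem _ hvb)
    · exact hsP hb (Set.mem_insert_of_mem _ hbv.symm)
  rw [← hcard, ← card_insert_of_notMem hvs]
  exact card_le_indepNum G hins

variable {G}

lemma exists_isIndepSet_insert_of_lt_indepNum_deleteEdges {v w : V} (hvw : v ≠ w)
    (hlt : indepNum G < indepNum (G.deleteEdges {s(v, w)})) :
    ∃ S : Finset V, v ∉ S ∧ w ∉ S ∧ G.IsIndepSet ↑(insert v S) ∧ G.IsIndepSet ↑(insert w S) ∧
      #S + 1 = indepNum G := by
  obtain ⟨T, hT, hTcard⟩ := exists_isIndepSet_card_eq_indepNum (G.deleteEdges {s(v, w)})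
  have hTw : G.IsIndepSet ↑(T.erase w) := by
    rw [coe_erase]
    exact hT.diff_singleton_of_deleteEdges
  have hTv : G.IsIndepSet ↑(T.erase v) := by
    rw [coe_erase]
    rw [Sym2.eq_swap] at hT
    exact hT.diff_singleton_of_deleteEdges
  have hmem {x : V} (hx : G.IsIndepSet ↑(T.erase x)) : x ∈ T := by
    by_contra h
    have := card_le_indepNum G hx
    rw [erase_eq_of_notMem h] at this
    omega
  have hvTw : v ∈ T.erase w := mem_erase.mpr ⟨hvw, hmem hTv⟩
  have hwTv : w ∈ T.erase v := mem_erase.mpr ⟨hvw.symm, hmem hTw⟩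
  refine ⟨(T.erase w).erase v, notMem_erase _ _, ?_, ?_, ?_, ?_⟩
  · simp
  · rwa [insert_erase hvTw]
  · rwa [erase_right_comm, insert_erase hwTv]
  · have := card_le_indepNum G hTw
    have := card_erase_add_one hvTw
    have := card_erase_add_one (hmem hTw)
    omega

end IndepNum

theorem stmt_11 {V : Type*} [Fintype V] (G : SimpleGraph V)
    (hcrit : AlphaCritical G) (v : V) (hv : ∃ w, G.Adj v w) :
    indepNum G = indepNum (G.induce ({v}ᶜ : Set V)) ∧
      indepNum G = indepNum (G.induce ((insert v (G.neighborSet v))ᶜ : Set V)) + 1 := by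
  obtain ⟨w, hvw⟩ := hv
  obtain ⟨S, hvS, hwS, hv, hw, hcard⟩ :=
    exists_isIndepSet_insert_of_lt_indepNum_deleteEdges (G.ne_of_adj hvw) (hcrit _ hvw)
  have hw_avoids_v : (↑(insert w S) : Set V) ⊆ {v}ᶜ := by
    rintro x hx rfl
    rcases mem_insert.mp hx with h | h
    exacts [G.ne_of_adj hvw h, hvS h]
  have hS_avoids_closedNbhd : (↑S : Set V) ⊆ (insert v (G.neighborSet v))ᶜ := by
    rintro x hx (rfl | hadj)
    · exact hvS hx
    · exact hv (mem_insert_self v S) (mem_insert_of_mem hx) (G.ne_of_adj hadj) hadj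
  have hle_delete_v := card_le_indepNum_induce G _ hw hw_avoids_v
  have hle_delete_closedNbhd :=
    card_le_indepNum_induce G _ (hv.mono (subset_insert v S)) hS_avoids_closedNbhd
  rw [card_insert_of_notMem hwS, hcard] at hle_delete_v
  exact ⟨le_antisymm hle_delete_v (indepNum_induce_le G _),
    le_antisymm (by omega) (indepNum_induce_compl_closedNbhd_add_one_le G v)⟩
end

section
/- For every edge vw of an α-critical graph G, there exist maximum independent sets S and S′ of G such that v ∈ S, w ∉ S, w ∈ S′, and v ∉ S′. -/
/-
Delete the edge `vw`. By criticality the resulting graph has an independent set `T` larger than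
any independent set of `G`. Since `T` is independent in `G` unless it contains both ends of the
deleted edge, `v, w ∈ T`, and then `T \ {w}` and `T \ {v}` are independent in `G` and of size
`|T| - 1 ≥ α(G)`, hence maximum.
-/

open Finset
open scoped Classical

section

variable {V : Type*} {G : SimpleGraph V}

lemma card_le_indepNum_s14 [Fintype V] {S : Finset V} (hS : ∀ a ∈ S, ∀ b ∈ S, ¬ G.Adj a b) :
    S.card ≤ indepNum G :=
  le_sup (mem_filter.mpr ⟨mem_univ _, hS⟩)

lemma exists_card_eq_indepNum [Fintype V] (G : SimpleGraph V) :
    ∃ T : Finset V, (∀ a ∈ T, ∀ b ∈ T, ¬ G.Adj a b) ∧ T.card = indepNum G := by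
  obtain ⟨T, hT, hsup⟩ := exists_mem_eq_sup
    (univ.filter fun s : Finset V => ∀ a ∈ s, ∀ b ∈ s, ¬ G.Adj a b) ⟨∅, by simp⟩ card
  exact ⟨T, (mem_filter.mp hT).2, hsup.symm⟩

lemma indep_erase_of_indep_deleteEdges {v w : V} {T : Finset V}
    (hT : ∀ a ∈ T, ∀ b ∈ T, ¬ (G.deleteEdges {s(v, w)}).Adj a b) :
    ∀ a ∈ T.erase w, ∀ b ∈ T.erase w, ¬ G.Adj a b := by
  intro a ha b hb hab
  have hedge : s(a, b) = s(v, w) := by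
    by_contra hne
    exact hT a (mem_of_mem_erase ha) b (mem_of_mem_erase hb)
      (SimpleGraph.deleteEdges_adj.mpr ⟨hab, by simpa using hne⟩)
  rcases Sym2.eq_iff.mp hedge with ⟨-, rfl⟩ | ⟨rfl, -⟩
  · exact ne_of_mem_erase hb rfl
  · exact ne_of_mem_erase ha rfl

lemma exists_indep_card_eq_indepNum_mem_notMem [Fintype V] {v w : V} (hne : v ≠ w)
    (hlt : indepNum G < indepNum (G.deleteEdges {s(v, w)})) :
    ∃ S : Finset V, (∀ a ∈ S, ∀ b ∈ S, ¬ G.Adj a b) ∧ S.card = indepNum G ∧ v ∈ S ∧ w ∉ S := by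
  obtain ⟨T, hT, hTcard⟩ := exists_card_eq_indepNum (G.deleteEdges {s(v, w)})
  have hindep_w := indep_erase_of_indep_deleteEdges hT
  have hindep_v := indep_erase_of_indep_deleteEdges (v := w) (w := v) (by rwa [Sym2.eq_swap])
  have hwT : w ∈ T := by
    by_contra hw
    rw [erase_eq_of_notMem hw] at hindep_w
    exact absurd (card_le_indepNum_s14 hindep_w) (by omega)
  have hvT : v ∈ T := by
    by_contra hv
    rw [erase_eq_of_notMem hv] at hindep_v
    exact absurd (card_le_indepNum_s14 hindep_v) (by omega)
  have hcard : (T.erase w).card + 1 = T.card := card_erase_add_one hwT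
  refine ⟨T.erase w, hindep_w, ?_, mem_erase.mpr ⟨hne, hvT⟩, notMem_erase w T⟩
  exact le_antisymm (card_le_indepNum_s14 hindep_w) (by omega)

end

theorem stmt_14 {V : Type*} [Fintype V] {G : SimpleGraph V}
    (hcrit : AlphaCritical G) (v w : V) (hvw : G.Adj v w) :
    ∃ S S' : Finset V,
      (∀ a ∈ S, ∀ b ∈ S, ¬ G.Adj a b) ∧ S.card = indepNum G ∧ v ∈ S ∧ w ∉ S ∧
      (∀ a ∈ S', ∀ b ∈ S', ¬ G.Adj a b) ∧ S'.card = indepNum G ∧ w ∈ S' ∧ v ∉ S' := by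
  have hlt : indepNum G < indepNum (G.deleteEdges {s(v, w)}) := hcrit _ hvw
  obtain ⟨S, hS, hScard, hvS, hwS⟩ := exists_indep_card_eq_indepNum_mem_notMem hvw.ne hlt
  obtain ⟨S', hS', hS'card, hwS', hvS'⟩ :=
    exists_indep_card_eq_indepNum_mem_notMem hvw.ne.symm (by rwa [Sym2.eq_swap])
  exact ⟨S, S', hS, hScard, hvS, hwS, hS', hS'card, hwS', hvS'⟩
end

section
/- Define f_T(n, α) = (⌈n/α⌉ + 1)^p · (⌊n/α⌋ + 1)^{α − p} with p = n mod α. For integers 2 ≤ α ≤ n − 1, one has f_T(n, α) = f_T(n − 1, α) + f_T(n − ⌈n/α⌉, α − 1). -/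
open Finset
open scoped Classical

/-- The Turán graph `T(n, α)`: the disjoint union of `α` balanced cliques on `n`
vertices (vertices are grouped into cliques by their residue modulo `α`; this is
the complement of Mathlib's complete multipartite `turanGraph`). -/
def turanUnionOfCliques (n α : ℕ) : SimpleGraph (Fin n) :=
  (SimpleGraph.turanGraph n α)ᶜ

/-- `f_T(n, α) = (⌈n/α⌉ + 1)^p * (⌊n/α⌋ + 1)^(α - p)` with `p = n % α`,
the Fibonacci index of the Turán graph `T(n, α)`. -/
def fT (n α : ℕ) : ℕ :=
  ((n + α - 1) / α + 1) ^ (n % α) * (n / α + 1) ^ (α - n % α)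

/-! Write `n = α q + p` with `0 ≤ p < α`. Then `f_T(n, α) = (q + 2)^p (q + 1)^(α - p)`, and
for `p > 0` both terms on the right share the factor `(q + 2)^(p - 1) (q + 1)^(α - p)`, leaving
`(q + 1) + 1 = q + 2`. For `p = 0` one writes `n = α (q + 1)`, so that `n - 1` has remainder
`α - 1` and `n - ⌈n/α⌉ = (α - 1)(q + 1)`, and the same cancellation applies. -/

namespace Nat

lemma mul_add_div_of_lt {α q p : ℕ} (hp : p < α) : (α * q + p) / α = q := by
  rw [Nat.mul_add_div (by omega), Nat.div_eq_of_lt hp, add_zero]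

end Nat

lemma fT_mul_add_of_lt {α q p : ℕ} (hp : p < α) :
    fT (α * q + p) α = (q + 2) ^ p * (q + 1) ^ (α - p) := by
  unfold fT
  rw [Nat.mul_add_mod, Nat.mod_eq_of_lt hp, Nat.mul_add_div_of_lt hp]
  rcases p with _ | p
  · simp
  · rw [show α * q + (p + 1) + α - 1 = α * (q + 1) + p by rw [Nat.mul_succ]; omega,
      Nat.mul_add_div_of_lt (by omega)]

lemma fT_mul {α : ℕ} (q : ℕ) (hα : 0 < α) : fT (α * q) α = (q + 1) ^ α := by
  simpa using fT_mul_add_of_lt (q := q) hα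

lemma fT_mul_add_succ {α q p : ℕ} (hp : p + 1 < α) :
    fT (α * q + (p + 1)) α = fT (α * q + p) α + fT ((α - 1) * q + p) (α - 1) := by
  obtain ⟨k, rfl⟩ : ∃ k, α = p + 1 + k + 1 := ⟨α - p - 2, by omega⟩
  rw [fT_mul_add_of_lt hp, fT_mul_add_of_lt (by omega), fT_mul_add_of_lt (by omega),
    show p + 1 + k + 1 - (p + 1) = k + 1 by omega, show p + 1 + k + 1 - p = k + 2 by omega,
    show p + 1 + k + 1 - 1 - p = k + 1 by omega]
  ring

lemma fT_mul_succ {α : ℕ} (q : ℕ) (hα : 1 < α) :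
    fT (α * (q + 1)) α = fT (α * q + (α - 1)) α + fT ((α - 1) * (q + 1)) (α - 1) := by
  obtain ⟨k, rfl⟩ : ∃ k, α = k + 1 := ⟨α - 1, by omega⟩
  rw [fT_mul _ (by omega), fT_mul_add_of_lt (by omega), fT_mul _ (by omega),
    show k + 1 - 1 = k by omega, show k + 1 - k = 1 by omega]
  ring

theorem stmt_16_general (n α : ℕ) (h1 : 2 ≤ α) (hn : 1 ≤ n) :
    fT n α = fT (n - 1) α + fT (n - (n + α - 1) / α) (α - 1) := by
  obtain ⟨q, p, hp, rfl⟩ : ∃ q p, p < α ∧ n = α * q + p :=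
    ⟨n / α, n % α, Nat.mod_lt _ (by omega), (Nat.div_add_mod n α).symm⟩
  rcases p with _ | p
  · obtain ⟨q, rfl⟩ := Nat.exists_eq_add_one_of_ne_zero (show q ≠ 0 by rintro rfl; simp at hn)
    have hceil : (α * (q + 1) + 0 + α - 1) / α = q + 1 := by
      rw [show α * (q + 1) + 0 + α - 1 = α * (q + 1) + (α - 1) by omega,
        Nat.mul_add_div_of_lt (by omega)]
    rw [hceil, show α * (q + 1) + 0 - 1 = α * q + (α - 1) by rw [Nat.mul_succ]; omega,
      show α * (q + 1) + 0 - (q + 1) = (α - 1) * (q + 1) by rw [Nat.sub_one_mul]; omega]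
    exact fT_mul_succ q (by omega)
  · have hceil : (α * q + (p + 1) + α - 1) / α = q + 1 := by
      rw [show α * q + (p + 1) + α - 1 = α * (q + 1) + p by rw [Nat.mul_succ]; omega,
        Nat.mul_add_div_of_lt (by omega)]
    have hq : q ≤ α * q := Nat.le_mul_of_pos_left q (by omega)
    rw [hceil, show α * q + (p + 1) - 1 = α * q + p by omega,
      show α * q + (p + 1) - (q + 1) = (α - 1) * q + p by rw [Nat.sub_one_mul]; omega]
    exact fT_mul_add_succ hp

theorem stmt_16 (n α : ℕ) (h1 : 2 ≤ α) (h2 : α ≤ n - 1) (hn : 1 ≤ n) :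
    fT n α = fT (n - 1) α + fT (n - (n + α - 1) / α) (α - 1) :=
  stmt_16_general n α h1 hn
end

section
/- The function f_T(n, α) = (⌈n/α⌉ + 1)^p · (⌊n/α⌋ + 1)^{α − p}, where p = n mod α, is strictly increasing in n for fixed α ≥ 1 (for n ≥ α), and strictly increasing in α for fixed n (for 1 ≤ α ≤ n). -/
open Finset
open scoped Classical

/-!
Write `q = n / α` and `r = n % α`. For `α ∣ n` the ceiling `⌈n/α⌉` is `q` and the exponent `r`
is `0`; otherwise `⌈n/α⌉ = q + 1`. Either way `f_T(n, α) = (q + 2)^r (q + 1)^(α - r)`, and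
passing from `n` to `n + 1` turns one factor `q + 1` into `q + 2`, so `f_T` grows in `n`.
Growth in `α` comes from the sharper bound `4 f_T(n, α) ≤ 3 f_T(n, α + 1)` for `n > α`, proved by
induction on `n`: it is an equality at `n = α + 1`, and each step multiplies `f_T(·, α)` by
`(q + 2)/(q + 1)`, which is at most the factor `(q' + 2)/(q' + 1)`, `q' = n / (α + 1) ≤ q`,
picked up by `f_T(·, α + 1)`.
-/

/-- The product of `s + 1` over the part sizes `s` of the balanced partition of `n` into
`α` parts. -/
def balancedProd (n α : ℕ) : ℕ :=
  (n / α + 2) ^ (n % α) * (n / α + 1) ^ (α - n % α)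

lemma balancedProd_pos (n α : ℕ) : 0 < balancedProd n α := by
  unfold balancedProd; positivity

lemma Nat.add_sub_one_div_of_not_dvd {n α : ℕ} (hα : 0 < α) (h : ¬α ∣ n) :
    (n + α - 1) / α = n / α + 1 := by
  obtain ⟨m, rfl⟩ : ∃ m, n = m + 1 := Nat.exists_eq_succ_of_ne_zero (by rintro rfl; simp at h)
  rw [Nat.succ_div_of_not_dvd h, show m + 1 + α - 1 = m + α by omega, Nat.add_div_right m hα]

lemma fT_eq_balancedProd {n α : ℕ} (hα : 0 < α) : fT n α = balancedProd n α := by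
  by_cases h : α ∣ n
  · simp [fT, balancedProd, Nat.mod_eq_zero_of_dvd h]
  · rw [fT, balancedProd, Nat.add_sub_one_div_of_not_dvd hα h]

lemma balancedProd_mul_add {α q r : ℕ} (hr : r < α) :
    balancedProd (α * q + r) α = (q + 2) ^ r * (q + 1) ^ (α - r) := by
  rw [balancedProd, Nat.mul_add_div (by omega), Nat.mul_add_mod, Nat.div_eq_of_lt hr,
    Nat.mod_eq_of_lt hr, add_zero]

lemma balancedProd_self {α : ℕ} (hα : 0 < α) : balancedProd α α = 2 ^ α := by
  simpa using balancedProd_mul_add (q := 1) hα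

lemma balancedProd_succ {n α : ℕ} (hα : 0 < α) :
    (n / α + 1) * balancedProd (n + 1) α = (n / α + 2) * balancedProd n α := by
  obtain ⟨q, r, hr, rfl⟩ : ∃ q r, r < α ∧ n = α * q + r :=
    ⟨n / α, n % α, Nat.mod_lt n hα, (Nat.div_add_mod n α).symm⟩
  rw [Nat.mul_add_div hα, Nat.div_eq_of_lt hr, add_zero, balancedProd_mul_add hr]
  rcases Nat.lt_or_ge (r + 1) α with hr' | hr'
  · rw [add_assoc, balancedProd_mul_add hr', show α - r = α - (r + 1) + 1 by omega]
    ring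
  · obtain rfl : α = r + 1 := by omega
    rw [show (r + 1) * q + r + 1 = (r + 1) * (q + 1) + 0 by ring,
      balancedProd_mul_add hα, Nat.sub_zero, Nat.add_sub_cancel_left]
    ring

lemma balancedProd_strictMono_left {α : ℕ} (hα : 0 < α) : StrictMono (balancedProd · α) :=
  strictMono_nat_of_lt_succ fun n => by
    refine Nat.lt_of_mul_lt_mul_left (a := n / α + 1) ?_
    rw [balancedProd_succ hα]
    exact Nat.mul_lt_mul_of_pos_right (by omega) (balancedProd_pos n α)

lemma four_mul_balancedProd_le {α n : ℕ} (hα : 0 < α) (hn : α + 1 ≤ n) :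
    4 * balancedProd n α ≤ 3 * balancedProd n (α + 1) := by
  induction n, hn using Nat.le_induction with
  | base =>
    have hstep := balancedProd_succ (n := α) hα
    rw [Nat.div_self hα, balancedProd_self hα] at hstep
    rw [balancedProd_self (by omega), pow_succ]
    omega
  | succ n _ ih =>
    have hq : n / (α + 1) ≤ n / α := Nat.div_le_div_left (by omega) hα
    set q := n / α
    set q' := n / (α + 1)
    refine Nat.le_of_mul_le_mul_left (c := (q + 1) * (q' + 1)) ?_ (by positivity)
    calc (q + 1) * (q' + 1) * (4 * balancedProd (n + 1) α)
        = 4 * (q' + 1) * ((q + 2) * balancedProd n α) := by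
          rw [← balancedProd_succ hα]; ring
      _ ≤ 3 * (q + 1) * ((q' + 2) * balancedProd n (α + 1)) := by
          nlinarith [Nat.mul_le_mul_left ((q' + 1) * (q + 2)) ih,
            Nat.mul_le_mul_right (balancedProd n (α + 1)) hq]
      _ = (q + 1) * (q' + 1) * (3 * balancedProd (n + 1) (α + 1)) := by
          rw [← balancedProd_succ (by omega)]; ring

lemma balancedProd_lt_succ_right {n α : ℕ} (hα : 0 < α) (hn : α + 1 ≤ n) :
    balancedProd n α < balancedProd n (α + 1) := by
  have := four_mul_balancedProd_le hα hn
  have := balancedProd_pos n α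
  omega

lemma balancedProd_lt_of_lt_right {n α β : ℕ} (hα : 0 < α) (hαβ : α < β) (hβ : β ≤ n) :
    balancedProd n α < balancedProd n β := by
  induction β, hαβ using Nat.le_induction with
  | base => exact balancedProd_lt_succ_right hα hβ
  | succ β hαβ ih => exact (ih (by omega)).trans (balancedProd_lt_succ_right (by omega) hβ)

theorem stmt_17 :
    (∀ α n m : ℕ, 1 ≤ α → α ≤ n → n < m → fT n α < fT m α) ∧
      (∀ n α β : ℕ, 1 ≤ α → α < β → β ≤ n → fT n α < fT n β) := by
  constructor
  · intro α n m hα _ hnm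
    rw [fT_eq_balancedProd hα, fT_eq_balancedProd hα]
    exact balancedProd_strictMono_left hα hnm
  · intro n α β hα hαβ hβn
    rw [fT_eq_balancedProd hα, fT_eq_balancedProd (by omega)]
    exact balancedProd_lt_of_lt_right hα hαβ hβn
end
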